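/- arXiv:1004.2717 — 7 statements merged into one kernel-verified Lean document; each statement's English description precedes it below -/
import Mathlib

section
/- Let A be a lattice with least element ⊥, let f : A → A be an O-adjoint via a finitary G, and let a ∈ A be a least fixed point of f (i.e., f a = a, and a ≤ b for every b with f b ≤ b). Then a is the least upper bound of the set {f^[n] ⊥ | n ∈ ℕ}: f^[n] ⊥ ≤ a for every n, and for every ψ ∈ A, if f^[n] ⊥ ≤ ψ for all n ∈ ℕ, then a ≤ ψ. (Every finitary O-adjoint is constructive.) -/
/-!
Monotonicity of `f` makes `f^[n] ⊥` an increasing chain below every fixed point. Conversely, let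
`ψ` bound the chain. If `χ` bounds it, then `f (f^[N] ⊥) ≤ χ` gives some `χ' ∈ G χ` above `f^[N] ⊥`;
as `G χ` is finite and the chain increases, one `N` serves all of `G χ`, so some `χ' ∈ G χ` bounds the
whole chain. The bounds of the chain inside the finite `G`-closure of `ψ` thus form a finite set `T`
meeting every `G χ` with `χ ∈ T`, and its infimum `b ≤ ψ` satisfies `f b ≤ b`, whence `a ≤ b ≤ ψ`.
-/

section

open Set Filter

variable {A : Type*}

def IsOAdjoint [Preorder A] (f : A → A) (G : A → Finset A) : Prop :=
  ∀ ρ ψ : A, f ρ ≤ ψ ↔ ∃ χ ∈ G ψ, ρ ≤ χ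

def closureUnder (G : A → Finset A) (ψ : A) : Set A :=
  ⋂₀ {S : Set A | ψ ∈ S ∧ ∀ χ ∈ S, (G χ : Set A) ⊆ S}

namespace closureUnder

variable {G : A → Finset A} {ψ : A}

theorem self_mem : ψ ∈ closureUnder G ψ :=
  fun _ hS => hS.1

theorem subset_of_mem {χ : A} (hχ : χ ∈ closureUnder G ψ) : (G χ : Set A) ⊆ closureUnder G ψ :=
  fun _ hχ' S hS => hS.2 χ (hχ S hS) hχ'

end closureUnder

namespace IsOAdjoint

variable {f : A → A} {G : A → Finset A}

theorem monotone [Preorder A] (hG : IsOAdjoint f G) : Monotone f := by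
  intro x y hxy
  obtain ⟨χ, hχ, hyχ⟩ := (hG y (f y)).1 le_rfl
  exact (hG x (f y)).2 ⟨χ, hχ, hxy.trans hyχ⟩

theorem iterate_bot_le_of_isFixedPt [Preorder A] [OrderBot A] (hG : IsOAdjoint f G) {a : A}
    (ha : f a = a) (n : ℕ) : f^[n] ⊥ ≤ a :=
  (hG.monotone.iterate n bot_le).trans_eq (Function.iterate_fixed ha n)

theorem exists_mem_upperBounds_iterate_bot [Preorder A] [OrderBot A] (hG : IsOAdjoint f G)
    {χ : A} (hχ : χ ∈ upperBounds (range fun n => f^[n] ⊥)) :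
    ∃ χ' ∈ G χ, χ' ∈ upperBounds (range fun n => f^[n] ⊥) := by
  have hchain : Monotone fun n => f^[n] ⊥ := hG.monotone.monotone_iterate_of_le_map bot_le
  simp only [mem_upperBounds, forall_mem_range] at hχ ⊢
  by_contra! hnot
  have hfail : ∀ᶠ N in atTop, ∀ χ' ∈ G χ, ¬f^[N] ⊥ ≤ χ' := by
    refine (eventually_all_finset _).2 fun χ' hχ' => ?_
    obtain ⟨n, hn⟩ := hnot χ' hχ'
    exact eventually_atTop.2 ⟨n, fun N hN hle => hn ((hchain hN).trans hle)⟩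
  obtain ⟨N, hN⟩ := hfail.exists
  have hstep : f (f^[N] ⊥) ≤ χ := (Function.iterate_succ_apply' f N ⊥).symm ▸ hχ (N + 1)
  obtain ⟨χ', hχ', hle⟩ := (hG _ χ).1 hstep
  exact hN χ' hχ' hle

theorem map_inf'_le [SemilatticeInf A] (hG : IsOAdjoint f G) {T : Finset A} (hT : T.Nonempty)
    (hclosed : ∀ χ ∈ T, ∃ χ' ∈ G χ, χ' ∈ T) : f (T.inf' hT id) ≤ T.inf' hT id := by
  refine (Finset.le_inf'_iff _ _).2 fun χ hχ => ?_
  obtain ⟨χ', hχ'G, hχ'T⟩ := hclosed χ hχ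
  exact (hG _ χ).2 ⟨χ', hχ'G, Finset.inf'_le id hχ'T⟩

theorem exists_le_map_le_of_mem_upperBounds [SemilatticeInf A] [OrderBot A] (hG : IsOAdjoint f G)
    {ψ : A} (hfin : (closureUnder G ψ).Finite)
    (hψ : ψ ∈ upperBounds (range fun n => f^[n] ⊥)) : ∃ b ≤ ψ, f b ≤ b := by
  set T := closureUnder G ψ ∩ upperBounds (range fun n => f^[n] ⊥)
  have hTfin : T.Finite := hfin.subset inter_subset_left
  have hψT : ψ ∈ hTfin.toFinset := hTfin.mem_toFinset.2 ⟨closureUnder.self_mem, hψ⟩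
  refine ⟨_, Finset.inf'_le id hψT, hG.map_inf'_le ⟨ψ, hψT⟩ fun χ hχ => ?_⟩
  obtain ⟨hχS, hχ⟩ := hTfin.mem_toFinset.1 hχ
  obtain ⟨χ', hχ'G, hχ'⟩ := hG.exists_mem_upperBounds_iterate_bot hχ
  exact ⟨χ', hχ'G, hTfin.mem_toFinset.2 ⟨closureUnder.subset_of_mem hχS hχ'G, hχ'⟩⟩

theorem isLUB_range_iterate_bot [SemilatticeInf A] [OrderBot A] (hG : IsOAdjoint f G)
    (hfin : ∀ ψ, (closureUnder G ψ).Finite) {a : A} (hfp : f a = a)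
    (hleast : ∀ b, f b ≤ b → a ≤ b) : IsLUB (range fun n => f^[n] ⊥) a := by
  refine ⟨forall_mem_range.2 (hG.iterate_bot_le_of_isFixedPt hfp), fun ψ hψ => ?_⟩
  obtain ⟨b, hbψ, hfb⟩ := hG.exists_le_map_le_of_mem_upperBounds (hfin ψ) hψ
  exact (hleast b hfb).trans hbψ

end IsOAdjoint

end

/-- Every finitary O-adjoint is constructive: if `f : A → A` is an
O-adjoint via a finitary `G` on a lattice `A` with bottom, and `a` is a least
fixed point of `f`, then `a` is the least upper bound of `{f^[n] ⊥ | n ∈ ℕ}`. -/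
theorem finitary_oAdjoint_constructive {A : Type*} [Lattice A] [OrderBot A]
    (G : A → Finset A) (f : A → A)
    (hG : ∀ ρ ψ : A, f ρ ≤ ψ ↔ ∃ χ ∈ G ψ, ρ ≤ χ)
    (hfin : ∀ ψ : A,
      (⋂₀ {S : Set A | ψ ∈ S ∧ ∀ χ ∈ S, (G χ : Set A) ⊆ S}).Finite)
    (a : A) (hfp : f a = a) (hleast : ∀ b : A, f b ≤ b → a ≤ b) :
    (∀ n : ℕ, f^[n] ⊥ ≤ a) ∧ (∀ ψ : A, (∀ n : ℕ, f^[n] ⊥ ≤ ψ) → a ≤ ψ) := by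
  have hlub := IsOAdjoint.isLUB_range_iterate_bot (G := G) hG hfin hfp hleast
  exact ⟨fun n => hlub.1 ⟨n, rfl⟩, fun ψ hψ => hlub.2 (Set.forall_mem_range.2 hψ)⟩
end

section
/- Let A be a partial order, and suppose f : A → A is an O-adjoint via G_f and g : A → A is an O-adjoint via G_g. Then the composite f ∘ g is an O-adjoint via the map ψ ↦ {χ' | there exists χ ∈ G_f ψ with χ' ∈ G_g χ} (the finite union of the sets G_g χ over χ ∈ G_f ψ); that is, for all ρ, ψ ∈ A: f (g ρ) ≤ ψ if and only if ρ ≤ χ' for some χ ∈ G_f ψ and χ' ∈ G_g χ. -/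
/-- O-adjoints are closed under composition: if `f` is an O-adjoint
via `Gf` and `g` is an O-adjoint via `Gg`, then `f ∘ g` is an O-adjoint via
`ψ ↦ ⋃ χ ∈ Gf ψ, Gg χ`. -/
theorem oAdjoint_comp {A : Type*} [PartialOrder A]
    (Gf Gg : A → Finset A) (f g : A → A)
    (hGf : ∀ ρ ψ : A, f ρ ≤ ψ ↔ ∃ χ ∈ Gf ψ, ρ ≤ χ)
    (hGg : ∀ ρ ψ : A, g ρ ≤ ψ ↔ ∃ χ ∈ Gg ψ, ρ ≤ χ) :
    ∀ ρ ψ : A, f (g ρ) ≤ ψ ↔ ∃ χ ∈ Gf ψ, ∃ χ' ∈ Gg χ, ρ ≤ χ' :=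
  fun ρ ψ => (hGf (g ρ) ψ).trans <| exists_congr fun χ => and_congr_right fun _ => hGg ρ χ
end

section
/- Let A be a lattice, and suppose f : A → A is an O-adjoint via G_f and g : A → A is an O-adjoint via G_g. Then the pointwise join h, defined by h x = f x ⊔ g x, is an O-adjoint via the map ψ ↦ {χ ⊓ χ' | χ ∈ G_f ψ, χ' ∈ G_g ψ}; that is, for all ρ, ψ ∈ A: f ρ ⊔ g ρ ≤ ψ if and only if ρ ≤ χ ⊓ χ' for some χ ∈ G_f ψ and χ' ∈ G_g ψ. -/
theorem exists_le_inf_iff_and {A : Type*} [SemilatticeInf A] {s t : Set A} {ρ : A} :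
    (∃ χ ∈ s, ∃ χ' ∈ t, ρ ≤ χ ⊓ χ') ↔ (∃ χ ∈ s, ρ ≤ χ) ∧ ∃ χ' ∈ t, ρ ≤ χ' := by
  simp only [le_inf_iff]
  constructor
  · rintro ⟨χ, hχ, χ', hχ', hle, hle'⟩
    exact ⟨⟨χ, hχ, hle⟩, χ', hχ', hle'⟩
  · rintro ⟨⟨χ, hχ, hle⟩, χ', hχ', hle'⟩
    exact ⟨χ, hχ, χ', hχ', hle, hle'⟩

/-- O-adjoints are closed under pointwise joins: if `f` is an
O-adjoint via `Gf` and `g` via `Gg` on a lattice, then `x ↦ f x ⊔ g x` is an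
O-adjoint via `ψ ↦ {χ ⊓ χ' | χ ∈ Gf ψ, χ' ∈ Gg ψ}`. -/
theorem oAdjoint_sup {A : Type*} [Lattice A]
    (Gf Gg : A → Finset A) (f g : A → A)
    (hGf : ∀ ρ ψ : A, f ρ ≤ ψ ↔ ∃ χ ∈ Gf ψ, ρ ≤ χ)
    (hGg : ∀ ρ ψ : A, g ρ ≤ ψ ↔ ∃ χ ∈ Gg ψ, ρ ≤ χ) :
    ∀ ρ ψ : A, f ρ ⊔ g ρ ≤ ψ ↔ ∃ χ ∈ Gf ψ, ∃ χ' ∈ Gg ψ, ρ ≤ χ ⊓ χ' := by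
  intro ρ ψ
  rw [sup_le_iff, hGf, hGg]
  exact exists_le_inf_iff_and.symm
end

section
/- Let A be a Boolean algebra, let c ∈ A, and suppose f : A → A is an O-adjoint via G_f. Then the map h defined by h x = c ⊓ f x is an O-adjoint via the map ψ ↦ G_f (cᶜ ⊔ ψ); that is, for all ρ, ψ ∈ A: c ⊓ f ρ ≤ ψ if and only if ρ ≤ χ for some χ ∈ G_f (cᶜ ⊔ ψ). -/
/-- O-adjoints are closed under meet with a constant: if `f` is an
O-adjoint via `Gf` on a Boolean algebra and `c` is a constant, then
`x ↦ c ⊓ f x` is an O-adjoint via `ψ ↦ Gf (cᶜ ⊔ ψ)`. -/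
theorem oAdjoint_const_inf {A : Type*} [BooleanAlgebra A]
    (Gf : A → Finset A) (f : A → A) (c : A)
    (hGf : ∀ ρ ψ : A, f ρ ≤ ψ ↔ ∃ χ ∈ Gf ψ, ρ ≤ χ) :
    ∀ ρ ψ : A, c ⊓ f ρ ≤ ψ ↔ ∃ χ ∈ Gf (cᶜ ⊔ ψ), ρ ≤ χ := by
  intro ρ ψ
  rw [← le_himp_iff', himp_eq, sup_comm, hGf]
end

section
/- Let B be a Boolean algebra and let c, d, ρ ∈ B. Then there exists a ∈ B such that ((a ⊓ c) ⊔ (aᶜ ⊓ d)) ⊓ (ρᶜ ⊔ a) = ⊤ if and only if c ⊔ (ρᶜ ⊓ d) = ⊤. -/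
/-! The constraint `ρᶜ ⊔ a = ⊤` says `ρ ≤ a`, and as `a` ranges over the elements above `ρ` the
Shannon expansion `(a ⊓ c) ⊔ (aᶜ ⊓ d)` is bounded by `c ⊔ (ρᶜ ⊓ d)`, a bound attained at
`a = ρ ⊔ c`. -/

section

variable {B : Type*} [BooleanAlgebra B] {a ρ : B} (c d : B)

theorem compl_sup_eq_top_iff_le : ρᶜ ⊔ a = ⊤ ↔ ρ ≤ a := by
  rw [sup_comm, ← himp_eq, himp_eq_top_iff]

theorem shannon_le_of_le (h : ρ ≤ a) : (a ⊓ c) ⊔ (aᶜ ⊓ d) ≤ c ⊔ (ρᶜ ⊓ d) :=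
  sup_le_sup inf_le_right (inf_le_inf_right d (compl_le_compl h))

theorem shannon_sup_self_eq (ρ : B) : ((ρ ⊔ c) ⊓ c) ⊔ ((ρ ⊔ c)ᶜ ⊓ d) = c ⊔ (ρᶜ ⊓ d) := by
  rw [inf_eq_right.mpr le_sup_right, compl_sup, inf_right_comm, ← sdiff_eq, sup_sdiff_self_right]

end

/-- In a Boolean algebra, there exists `a` with
`((a ⊓ c) ⊔ (aᶜ ⊓ d)) ⊓ (ρᶜ ⊔ a) = ⊤` iff `c ⊔ (ρᶜ ⊓ d) = ⊤`. -/
theorem shannon_witness_iff {B : Type*} [BooleanAlgebra B] (c d ρ : B) :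
    (∃ a : B, ((a ⊓ c) ⊔ (aᶜ ⊓ d)) ⊓ (ρᶜ ⊔ a) = ⊤) ↔ c ⊔ (ρᶜ ⊓ d) = ⊤ := by
  constructor
  · rintro ⟨a, h⟩
    obtain ⟨hshannon, hρa⟩ := inf_eq_top_iff.mp h
    exact top_unique (hshannon ▸ shannon_le_of_le c d (compl_sup_eq_top_iff_le.mp hρa))
  · intro h
    refine ⟨ρ ⊔ c, inf_eq_top_iff.mpr ⟨(shannon_sup_self_eq c d ρ).trans h, ?_⟩⟩
    exact compl_sup_eq_top_iff_le.mpr le_sup_left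
end

section
/- Let X be a type, let n, m be natural numbers, let A : Fin n → Set X and B : Fin m → Set X, let r : Fin n → ℕ and s : Fin m → ℕ be positive (r i ≥ 1 and s j ≥ 1 for all i, j), and let k : Fin n → ℕ and l : Fin m → ℕ satisfy the side condition ∑_i r i · (k i + 1) ≥ 1 + ∑_j s j · (l j). Suppose the premise holds pointwise: for every x ∈ X, ∑_{j : x ∈ B j} s j ≥ ∑_{i : x ∉ A i} r i. Then for every finitely supported multiset μ : X →₀ ℕ, either there exists i with ∑_{x ∉ A i} μ x ≤ k i, or there exists j with ∑_{x ∈ B j} μ x > l j. -/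
open scoped Classical

/-! Integrating the pointwise premise against `μ` gives
`∑ᵢ rᵢ · μ(¬Aᵢ) ≤ ∑ⱼ sⱼ · μ(Bⱼ)`. If every disjunct of the conclusion failed, the left side would
be at least `∑ᵢ rᵢ (kᵢ + 1)` and the right side at most `∑ⱼ sⱼ lⱼ`, against the side condition. -/

theorem Finsupp.sum_support_sum_ite_mul {X ι M : Type*} [Fintype ι] [CommSemiring M]
    (μ : X →₀ M) (p : ι → X → Prop) [∀ i x, Decidable (p i x)] (w : ι → M) :
    ∑ x ∈ μ.support, (∑ i, if p i x then w i else 0) * μ x =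
      ∑ i, w i * ∑ x ∈ μ.support.filter (p i), μ x := by
  simp only [Finset.sum_mul, Finset.mul_sum, Finset.sum_filter, ite_mul, zero_mul, mul_ite,
    mul_zero]
  exact Finset.sum_comm

theorem graded_rule_one_step_sound_general {X : Type*} {n m : ℕ}
    (A : Fin n → Set X) (B : Fin m → Set X)
    (r : Fin n → ℕ) (s : Fin m → ℕ) (k : Fin n → ℕ) (l : Fin m → ℕ)
    (hside : ∑ i : Fin n, r i * (k i + 1) ≥ 1 + ∑ j : Fin m, s j * l j)
    (hprem : ∀ x : X,
      (∑ j : Fin m, if x ∈ B j then s j else 0) ≥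
        ∑ i : Fin n, if x ∉ A i then r i else 0)
    (μ : X →₀ ℕ) :
    (∃ i : Fin n, ∑ x ∈ μ.support.filter (fun x => x ∉ A i), μ x ≤ k i) ∨
      (∃ j : Fin m, ∑ x ∈ μ.support.filter (fun x => x ∈ B j), μ x > l j) := by
  by_contra! ⟨hA, hB⟩
  have : ∑ i, r i * (k i + 1) ≤ ∑ j, s j * l j :=
    calc ∑ i, r i * (k i + 1)
        ≤ ∑ i, r i * ∑ x ∈ μ.support.filter (fun x => x ∉ A i), μ x :=
          Finset.sum_le_sum fun i _ => Nat.mul_le_mul_left _ (hA i)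
      _ = ∑ x ∈ μ.support, (∑ i, if x ∉ A i then r i else 0) * μ x :=
          (μ.sum_support_sum_ite_mul (fun i x => x ∉ A i) r).symm
      _ ≤ ∑ x ∈ μ.support, (∑ j, if x ∈ B j then s j else 0) * μ x :=
          Finset.sum_le_sum fun x _ => Nat.mul_le_mul_right _ (hprem x)
      _ = ∑ j, s j * ∑ x ∈ μ.support.filter (fun x => x ∈ B j), μ x :=
          μ.sum_support_sum_ite_mul (fun j x => x ∈ B j) s
      _ ≤ ∑ j, s j * l j := Finset.sum_le_sum fun j _ => Nat.mul_le_mul_left _ (hB j)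
  omega

/-- One-step soundness of the graded rule schema over multiset
semantics. If the premise `∑ -rᵢ(¬aᵢ) + ∑ sⱼ bⱼ ≥ 0` holds pointwise and the
side condition `∑ rᵢ (kᵢ + 1) ≥ 1 + ∑ sⱼ lⱼ` holds, then for every finite
multiset `μ` over `X`, the conclusion
`⋁ᵢ [kᵢ] Aᵢ ∨ ⋁ⱼ ⟨lⱼ⟩ Bⱼ` holds of `μ`. -/
theorem graded_rule_one_step_sound {X : Type*} {n m : ℕ}
    (A : Fin n → Set X) (B : Fin m → Set X)
    (r : Fin n → ℕ) (s : Fin m → ℕ) (k : Fin n → ℕ) (l : Fin m → ℕ)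
    (hr : ∀ i, 1 ≤ r i) (hs : ∀ j, 1 ≤ s j)
    (hside : ∑ i : Fin n, r i * (k i + 1) ≥ 1 + ∑ j : Fin m, s j * l j)
    (hprem : ∀ x : X,
      (∑ j : Fin m, if x ∈ B j then s j else 0) ≥
        ∑ i : Fin n, if x ∉ A i then r i else 0)
    (μ : X →₀ ℕ) :
    (∃ i : Fin n, ∑ x ∈ μ.support.filter (fun x => x ∉ A i), μ x ≤ k i) ∨
      (∃ j : Fin m, ∑ x ∈ μ.support.filter (fun x => x ∈ B j), μ x > l j) :=
  graded_rule_one_step_sound_general A B r s k l hside hprem μ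
end

section
/- For every fixed-point formula φ (over any similarity type Λ with an involutive dual map and any set of monotone templates), the Fischer–Ladner closure FL(φ), defined as the least set containing φ that is closed under immediate subformulas, under negation, and under unfolding of fixed-point operators, is finite. -/
/-- Templates: modal formulas in a parameter variable `p` and an argument
variable `x`, over a similarity type `Λ` of unary modal operators. -/
inductive Tmpl (Λ : Type*) : Type _
  | bot : Tmpl Λ
  | top : Tmpl Λ
  | p : Tmpl Λ
  | x : Tmpl Λ
  | and : Tmpl Λ → Tmpl Λ → Tmpl Λ
  | or : Tmpl Λ → Tmpl Λ → Tmpl Λ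
  | mod : Λ → Tmpl Λ → Tmpl Λ

/-- The dual template: swap `⊥`/`⊤` and `∧`/`∨`, replace each modality by its
dual, keep the variables. -/
def Tmpl.dualT {Λ : Type*} (d : Λ → Λ) : Tmpl Λ → Tmpl Λ
  | .bot => .top
  | .top => .bot
  | .p => .p
  | .x => .x
  | .and γ δ => .or (γ.dualT d) (δ.dualT d)
  | .or γ δ => .and (γ.dualT d) (δ.dualT d)
  | .mod h γ => .mod (d h) (γ.dualT d)

/-- Fixed-point formulas over a similarity type `Λ` and templates. -/
inductive Fp (Λ : Type*) : Type _
  | bot : Fp Λ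
  | top : Fp Λ
  | and : Fp Λ → Fp Λ → Fp Λ
  | or : Fp Λ → Fp Λ → Fp Λ
  | mod : Λ → Fp Λ → Fp Λ
  | sharp : Tmpl Λ → Fp Λ → Fp Λ
  | flat : Tmpl Λ → Fp Λ → Fp Λ

/-- Negation, defined by de Morgan's laws, `¬♥φ = (d ♥)(¬φ)`,
`¬♯_γ(φ) = ♭_{γ̄}(¬φ)` and `¬♭_γ(φ) = ♯_{γ̄}(¬φ)`. -/
def Fp.neg {Λ : Type*} (d : Λ → Λ) : Fp Λ → Fp Λ
  | .bot => .top
  | .top => .bot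
  | .and φ ψ => .or (φ.neg d) (ψ.neg d)
  | .or φ ψ => .and (φ.neg d) (ψ.neg d)
  | .mod h φ => .mod (d h) (φ.neg d)
  | .sharp γ φ => .flat (γ.dualT d) (φ.neg d)
  | .flat γ φ => .sharp (γ.dualT d) (φ.neg d)

/-- Substitution `γ(φ, ψ)`: substitute `φ` for the parameter `p` and `ψ` for
the argument `x` in the template `γ`. -/
def Tmpl.subst {Λ : Type*} : Tmpl Λ → Fp Λ → Fp Λ → Fp Λ
  | .bot, _, _ => .bot
  | .top, _, _ => .top
  | .p, φ, _ => φ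
  | .x, _, ψ => ψ
  | .and γ δ, φ, ψ => .and (γ.subst φ ψ) (δ.subst φ ψ)
  | .or γ δ, φ, ψ => .or (γ.subst φ ψ) (δ.subst φ ψ)
  | .mod h γ, φ, ψ => .mod h (γ.subst φ ψ)

/-- A set of formulas is Fischer–Ladner closed if it is closed under immediate
subformulas, under negation, and under unfolding of fixed points. -/
def FLClosed {Λ : Type*} (d : Λ → Λ) (S : Set (Fp Λ)) : Prop :=
  (∀ φ ψ : Fp Λ, Fp.and φ ψ ∈ S → φ ∈ S ∧ ψ ∈ S) ∧
  (∀ φ ψ : Fp Λ, Fp.or φ ψ ∈ S → φ ∈ S ∧ ψ ∈ S) ∧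
  (∀ (h : Λ) (φ : Fp Λ), Fp.mod h φ ∈ S → φ ∈ S) ∧
  (∀ (γ : Tmpl Λ) (φ : Fp Λ), Fp.sharp γ φ ∈ S → φ ∈ S) ∧
  (∀ (γ : Tmpl Λ) (φ : Fp Λ), Fp.flat γ φ ∈ S → φ ∈ S) ∧
  (∀ φ : Fp Λ, φ ∈ S → φ.neg d ∈ S) ∧
  (∀ (γ : Tmpl Λ) (φ : Fp Λ), Fp.sharp γ φ ∈ S → γ.subst φ (Fp.sharp γ φ) ∈ S) ∧
  (∀ (γ : Tmpl Λ) (φ : Fp Λ), Fp.flat γ φ ∈ S → γ.subst φ (Fp.flat γ φ) ∈ S)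

/-! Every formula of `FL(φ)` is, up to one negation, obtained from `φ` by taking subformulas and
unfolding fixed points. Subformulas of an unfolding `γ(a, ♯_γ(a))` are `a`, `♯_γ(a)` itself, or
instances `δ(a, ♯_γ(a))` of the finitely many subtemplates `δ` of `γ`, so these formulas form a
finite set `C φ` (`Fp.unfoldingClosure`). Negation commutes with this construction,
`C (¬φ) = ¬C φ`, and as negation is involutive, `C φ ∪ C (¬φ)` is a finite Fischer–Ladner closed
set containing `φ`. -/

namespace Tmpl

variable {Λ : Type*}

def subtemplates : Tmpl Λ → Set (Tmpl Λ)
  | .bot => {.bot}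
  | .top => {.top}
  | .p => {.p}
  | .x => {.x}
  | .and γ δ => insert (.and γ δ) (γ.subtemplates ∪ δ.subtemplates)
  | .or γ δ => insert (.or γ δ) (γ.subtemplates ∪ δ.subtemplates)
  | .mod h γ => insert (.mod h γ) γ.subtemplates

@[simp]
lemma mem_subtemplates_self (γ : Tmpl Λ) : γ ∈ γ.subtemplates := by
  cases γ <;> simp [subtemplates]

lemma finite_subtemplates (γ : Tmpl Λ) : γ.subtemplates.Finite := by
  induction γ <;> simp [subtemplates, *]

lemma subtemplates_subset_of_mem {γ δ : Tmpl Λ} (h : δ ∈ γ.subtemplates) :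
    δ.subtemplates ⊆ γ.subtemplates := by
  induction γ with
  | bot | top | p | x => simp_all [subtemplates]
  | and γ₁ γ₂ ih₁ ih₂ | or γ₁ γ₂ ih₁ ih₂ =>
    rcases h with rfl | h | h
    · rfl
    · exact (ih₁ h).trans (Set.subset_union_left.trans (Set.subset_insert _ _))
    · exact (ih₂ h).trans (Set.subset_union_right.trans (Set.subset_insert _ _))
  | mod _ γ ih =>
    rcases h with rfl | h
    · rfl
    · exact (ih h).trans (Set.subset_insert _ _)

lemma subtemplates_dualT (d : Λ → Λ) (γ : Tmpl Λ) :
    (γ.dualT d).subtemplates = dualT d '' γ.subtemplates := by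
  induction γ <;> simp [subtemplates, dualT, Set.image_insert_eq, Set.image_union, *]

lemma dualT_involutive {d : Λ → Λ} (hd : Function.Involutive d) :
    Function.Involutive (dualT d) := by
  intro γ
  induction γ <;> simp [dualT, hd _, *]

end Tmpl

namespace Fp

variable {Λ : Type*}

def unfoldingClosure : Fp Λ → Set (Fp Λ)
  | .bot => {.bot}
  | .top => {.top}
  | .and a b => insert (.and a b) (a.unfoldingClosure ∪ b.unfoldingClosure)
  | .or a b => insert (.or a b) (a.unfoldingClosure ∪ b.unfoldingClosure)
  | .mod h a => insert (.mod h a) a.unfoldingClosure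
  | .sharp γ a => insert (.sharp γ a)
      (a.unfoldingClosure ∪ (fun δ => δ.subst a (.sharp γ a)) '' γ.subtemplates)
  | .flat γ a => insert (.flat γ a)
      (a.unfoldingClosure ∪ (fun δ => δ.subst a (.flat γ a)) '' γ.subtemplates)

@[simp]
lemma mem_unfoldingClosure_self (φ : Fp Λ) : φ ∈ φ.unfoldingClosure := by
  cases φ <;> simp [unfoldingClosure]

lemma finite_unfoldingClosure (φ : Fp Λ) : φ.unfoldingClosure.Finite := by
  induction φ <;>
    simp [unfoldingClosure, Set.Finite.image, Tmpl.finite_subtemplates, *]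

lemma unfoldingClosure_subst_subset (δ : Tmpl Λ) (a b : Fp Λ) :
    (δ.subst a b).unfoldingClosure ⊆
      (fun δ' => δ'.subst a b) '' δ.subtemplates ∪ a.unfoldingClosure ∪ b.unfoldingClosure := by
  induction δ with
  | bot | top => simp [Tmpl.subst, unfoldingClosure, Tmpl.subtemplates]
  | p => exact fun _ h => Or.inl (Or.inr h)
  | x => exact Set.subset_union_right
  | and δ₁ δ₂ ih₁ ih₂ | or δ₁ δ₂ ih₁ ih₂ =>
    intro χ hχ
    have := @ih₁ χ
    have := @ih₂ χ
    simp only [Tmpl.subst, unfoldingClosure, Tmpl.subtemplates, Set.image_insert_eq,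
      Set.image_union, Set.mem_insert_iff, Set.mem_union] at *
    tauto
  | mod _ δ ih =>
    intro χ hχ
    have := @ih χ
    simp only [Tmpl.subst, unfoldingClosure, Tmpl.subtemplates, Set.image_insert_eq,
      Set.mem_insert_iff, Set.mem_union] at *
    tauto

lemma unfoldingClosure_subset_of_mem {φ ψ : Fp Λ} (h : ψ ∈ φ.unfoldingClosure) :
    ψ.unfoldingClosure ⊆ φ.unfoldingClosure := by
  induction φ generalizing ψ with
  | bot | top => simp_all [unfoldingClosure]
  | and a b iha ihb | or a b iha ihb =>
    rcases h with rfl | h | h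
    · rfl
    · exact (iha h).trans (Set.subset_union_left.trans (Set.subset_insert _ _))
    · exact (ihb h).trans (Set.subset_union_right.trans (Set.subset_insert _ _))
  | mod _ a ih =>
    rcases h with rfl | h
    · rfl
    · exact (ih h).trans (Set.subset_insert _ _)
  | sharp γ a ih | flat γ a ih =>
    rcases h with rfl | h | ⟨δ, hδ, rfl⟩
    · rfl
    · exact (ih h).trans (Set.subset_union_left.trans (Set.subset_insert _ _))
    · refine (unfoldingClosure_subst_subset δ _ _).trans
        (Set.union_subset (Set.union_subset ?_ ?_) ?_)
      · exact (Set.image_mono (Tmpl.subtemplates_subset_of_mem hδ)).trans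
          (Set.subset_union_right.trans (Set.subset_insert _ _))
      · exact Set.subset_union_left.trans (Set.subset_insert _ _)
      · rfl

lemma neg_subst (d : Λ → Λ) (δ : Tmpl Λ) (a b : Fp Λ) :
    (δ.subst a b).neg d = (δ.dualT d).subst (a.neg d) (b.neg d) := by
  induction δ <;> simp [Tmpl.subst, Tmpl.dualT, neg, *]

lemma unfoldingClosure_neg (d : Λ → Λ) (φ : Fp Λ) :
    (φ.neg d).unfoldingClosure = neg d '' φ.unfoldingClosure := by
  induction φ <;>
    simp [unfoldingClosure, neg, Set.image_insert_eq, Set.image_union, Set.image_image,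
      Tmpl.subtemplates_dualT, neg_subst, *]

lemma neg_involutive {d : Λ → Λ} (hd : Function.Involutive d) : Function.Involutive (neg d) := by
  intro φ
  induction φ <;> simp [neg, hd _, Tmpl.dualT_involutive hd _, *]

lemma flClosed_of_unfoldingClosure_subset {d : Λ → Λ} {S : Set (Fp Λ)}
    (hS : ∀ ψ ∈ S, ψ.unfoldingClosure ⊆ S) (hneg : ∀ ψ ∈ S, ψ.neg d ∈ S) : FLClosed d S := by
  refine ⟨?_, ?_, ?_, ?_, ?_, hneg, ?_, ?_⟩
  · exact fun _ _ h => ⟨hS _ h (by simp [unfoldingClosure]), hS _ h (by simp [unfoldingClosure])⟩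
  · exact fun _ _ h => ⟨hS _ h (by simp [unfoldingClosure]), hS _ h (by simp [unfoldingClosure])⟩
  · exact fun _ _ h => hS _ h (by simp [unfoldingClosure])
  · exact fun _ _ h => hS _ h (by simp [unfoldingClosure])
  · exact fun _ _ h => hS _ h (by simp [unfoldingClosure])
  · exact fun γ _ h => hS _ h (Or.inr (Or.inr ⟨γ, Tmpl.mem_subtemplates_self γ, rfl⟩))
  · exact fun γ _ h => hS _ h (Or.inr (Or.inr ⟨γ, Tmpl.mem_subtemplates_self γ, rfl⟩))

lemma flClosed_unfoldingClosure_union_neg {d : Λ → Λ} (hd : Function.Involutive d) (φ : Fp Λ) :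
    FLClosed d (φ.unfoldingClosure ∪ (φ.neg d).unfoldingClosure) := by
  refine flClosed_of_unfoldingClosure_subset ?_ ?_
  · rintro ψ (h | h)
    · exact (unfoldingClosure_subset_of_mem h).trans Set.subset_union_left
    · exact (unfoldingClosure_subset_of_mem h).trans Set.subset_union_right
  · rintro ψ (h | h)
    · exact Or.inr (unfoldingClosure_neg d φ ▸ Set.mem_image_of_mem _ h)
    · obtain ⟨χ, hχ, rfl⟩ := unfoldingClosure_neg d φ ▸ h
      exact Or.inl (by rwa [neg_involutive hd χ])

end Fp

/-- For an involutive dual map `d`, the Fischer–Ladner closure of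
any fixed-point formula `φ` — the least set containing `φ` that is
Fischer–Ladner closed — is finite. -/
theorem fischerLadner_closure_finite {Λ : Type*} (d : Λ → Λ)
    (hd : Function.Involutive d) (φ : Fp Λ) :
    (⋂₀ {S : Set (Fp Λ) | φ ∈ S ∧ FLClosed d S}).Finite :=
  ((Fp.finite_unfoldingClosure φ).union (Fp.finite_unfoldingClosure (φ.neg d))).subset <|
    Set.sInter_subset_of_mem
      ⟨Or.inl (Fp.mem_unfoldingClosure_self φ), Fp.flClosed_unfoldingClosure_union_neg hd φ⟩
end
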